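/- arXiv:1904.05234 — 2 statements merged into one kernel-verified Lean document; each statement's English description precedes it below -/
import Mathlib

section
/- Let D be exponentially distributed with rate λ, and let a blind-raising player P₀ achieve payoff r > 0 against a null opponent, with fixed loss cost c > 0 for a losing player. If a reactive counterbidder P₁ with zero latency (Δ₁ = 0) counterbids every bid of P₀ within time δ, then P₁'s expected payoff, which equals e^{−λδ}·r − (1 − e^{−λδ})·c in the limit as the outbid increment ε → 0, is strictly positive if and only if c/(r + c) < e^{−λδ}. -/
theorem stmt_2_general (lam δ r c : ℝ) (hr : 0 < r) (hc : 0 < c) :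
    0 < Real.exp (-lam * δ) * r - (1 - Real.exp (-lam * δ)) * c ↔
      c / (r + c) < Real.exp (-lam * δ) := by
  set p := Real.exp (-lam * δ)
  have payoff_eq : p * r - (1 - p) * c = p * (r + c) - c := by ring
  rw [payoff_eq, sub_pos, div_lt_iff₀ (add_pos hr hc)]

/-- With auction end time `D ~ Exp(λ)`, a blind raiser `P₀` earning payoff `r > 0`
against a null opponent, loss cost `c > 0`, and a zero-latency reactive counterbidder
`P₁` responding within time `δ`: in the limit `ε → 0` the counterbidder's expected
payoff is `e^{-λδ}·r - (1 - e^{-λδ})·c`, and it is strictly positive iff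
`c/(r+c) < e^{-λδ}`. -/
theorem stmt_2 (lam δ r c : ℝ) (hlam : 0 < lam) (hδ : 0 < δ) (hr : 0 < r) (hc : 0 < c) :
    0 < Real.exp (-lam * δ) * r - (1 - Real.exp (-lam * δ)) * c ↔
      c / (r + c) < Real.exp (-lam * δ) :=
  stmt_2_general lam δ r c hr hc
end

section
/- (Grim-trigger equilibrium condition) In the two-player grim-trigger cooperative PGA, the cooperative strategy profile is a Nash equilibrium if, for every interval j, the non-bidder's expected payoff from continuing to cooperate for the remainder of the game is at least her expected payoff from deviating at the start of interval j: E_cooperate^{non-bidder}(j) ≥ E_deviate^{non-bidder}(delay, j). Moreover, if deviation is strictly profitable for the non-bidder in some interval, no equilibrium holds, since by backward induction deviation is then profitable in earlier intervals as well. -/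
/-- Cooperative per-interval payoff to player `b`: if interval `i` is `b`'s bidding
turn (`i ≡ b (mod 2)`), she wins `1 - W i` when the auction ends there; otherwise
she pays the loss cost `c`. -/
noncomputable def pgaCoopPay (c : ℝ) (W : ℕ → ℝ) (b : Fin 2) (i : ℕ) : ℝ :=
  if i % 2 = b.val then 1 - W i else -c

/-- Probability that the exponential end time (rate `λ`) falls in interval
`[V i, V (i+1))`. -/
noncomputable def pgaPInt (lam : ℝ) (V : ℕ → ℝ) (i : ℕ) : ℝ :=
  Real.exp (-lam * V i) - Real.exp (-lam * V (i + 1))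

/-- Expected payoff to player `b` accrued from the cooperative play of intervals
`0, …, j-1`. -/
noncomputable def pgaCoopPrefix (lam c : ℝ) (W V : ℕ → ℝ) (b : Fin 2) (j : ℕ) : ℝ :=
  ∑ i ∈ Finset.range j, pgaPInt lam V i * pgaCoopPay c W b i

/-- `E_cooperate^{(P_b)}(j)`: expected payoff for `b` of cooperating for the rest of
the game from interval `j` on, conditioned on the auction having reached interval
`j` (intervals up to `i_max`, after which both players abandon and pay `-c`). -/
noncomputable def pgaEcoop (lam c : ℝ) (W V : ℕ → ℝ) (imax : ℕ) (b : Fin 2) (j : ℕ) : ℝ :=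
  ((∑ i ∈ Finset.Icc j imax, pgaPInt lam V i * pgaCoopPay c W b i) +
      Real.exp (-lam * V (imax + 1)) * (-c)) / Real.exp (-lam * V j)

/-- `E_deviate(delay, j)`: expected payoff of the non-bidder deviating at the start of
interval `j`, with response delay `d`: she wins `max(-c, 1 - W (j+1))` if the auction
ends within the delay (probability `p_time(d) = 1 - e^{-λd}`), else the grim trigger
fires and she gets `-c`. -/
noncomputable def pgaEdev (lam c d : ℝ) (W : ℕ → ℝ) (j : ℕ) : ℝ :=
  (1 - Real.exp (-lam * d)) * max (-c) (1 - W (j + 1)) + Real.exp (-lam * d) * (-c)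

/-- First deviation in a profile of strategies (a strategy is `none` = always
cooperate, or `some j` = deviate at the start of interval `j`). -/
def pgaFirstDev (s : Fin 2 → Option ℕ) : Option (Fin 2 × ℕ) :=
  match s 0, s 1 with
  | none, none => none
  | some j, none => some (0, j)
  | none, some j => some (1, j)
  | some j0, some j1 => if j0 ≤ j1 then some (0, j0) else some (1, j1)

/-- Expected payoff to player `b` of a strategy profile `s` in the grim-trigger
cooperative PGA: cooperative play until the first deviation; the first deviator at
interval `j` gets the deviation payoff (conditioned on reaching `j`, weighted by the
survival probability `e^{-λ V j}`), and the other player gets `-c`. -/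
noncomputable def pgaPay (lam c d : ℝ) (W V : ℕ → ℝ) (imax : ℕ) (b : Fin 2)
    (s : Fin 2 → Option ℕ) : ℝ :=
  match pgaFirstDev s with
  | none => pgaCoopPrefix lam c W V b (imax + 1) + Real.exp (-lam * V (imax + 1)) * (-c)
  | some (p, j) =>
      pgaCoopPrefix lam c W V b j +
        Real.exp (-lam * V j) * (if p = b then pgaEdev lam c d W j else -c)

/-- A deviation by player `b` is admissible if it occurs at an interval `j ≤ i_max`
in which `b` is the non-bidder (deviating while holding the top bid is never
profitable, so only non-bidder deviations need be considered). -/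
def pgaValidDev (imax : ℕ) (b : Fin 2) : Option ℕ → Prop
  | none => True
  | some j => j ≤ imax ∧ j % 2 ≠ b.val

/-- The profile `s` is a Nash equilibrium: no player can strictly improve her
expected payoff by a unilateral admissible deviation. -/
def pgaIsNash (lam c d : ℝ) (W V : ℕ → ℝ) (imax : ℕ) (s : Fin 2 → Option ℕ) : Prop :=
  ∀ b : Fin 2, ∀ s' : Option ℕ, pgaValidDev imax b s' →
    pgaPay lam c d W V imax b (Function.update s b s') ≤ pgaPay lam c d W V imax b s

/-! Cooperating throughout and deviating at `j` yield the same payoff up to `j` and differ only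
in the continuation, which is weighted by the survival probability `exp (-lam * V j) > 0`. So a
deviation at `j` pays off exactly when `pgaEcoop j < pgaEdev j`. -/

theorem pgaCoopPrefix_succ_eq_add_sum_Icc (lam c : ℝ) (W V : ℕ → ℝ) (b : Fin 2) {j imax : ℕ}
    (hj : j ≤ imax + 1) :
    pgaCoopPrefix lam c W V b (imax + 1) =
      pgaCoopPrefix lam c W V b j +
        ∑ i ∈ Finset.Icc j imax, pgaPInt lam V i * pgaCoopPay c W b i := by
  rw [pgaCoopPrefix, pgaCoopPrefix, ← Finset.Ico_add_one_right_eq_Icc, ← Nat.Ico_zero_eq_range,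
    ← Nat.Ico_zero_eq_range, Finset.sum_Ico_consecutive _ (Nat.zero_le j) hj]

theorem pgaPay_none_eq_add_pgaEcoop (lam c d : ℝ) (W V : ℕ → ℝ) (b : Fin 2) {j imax : ℕ}
    (hj : j ≤ imax + 1) :
    pgaPay lam c d W V imax b (fun _ => none) =
      pgaCoopPrefix lam c W V b j + Real.exp (-lam * V j) * pgaEcoop lam c W V imax b j := by
  simp only [pgaPay, pgaFirstDev]
  rw [pgaEcoop, mul_div_cancel₀ _ (Real.exp_pos _).ne',
    pgaCoopPrefix_succ_eq_add_sum_Icc _ _ _ _ _ hj]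
  ring

theorem pgaPay_update_some (lam c d : ℝ) (W V : ℕ → ℝ) (imax : ℕ) (b : Fin 2) (j : ℕ) :
    pgaPay lam c d W V imax b (Function.update (fun _ => none) b (some j)) =
      pgaCoopPrefix lam c W V b j + Real.exp (-lam * V j) * pgaEdev lam c d W j := by
  fin_cases b <;> simp [pgaPay, pgaFirstDev, Function.update]

theorem pgaPay_update_some_le_iff (lam c d : ℝ) (W V : ℕ → ℝ) (b : Fin 2) {j imax : ℕ}
    (hj : j ≤ imax) :
    pgaPay lam c d W V imax b (Function.update (fun _ => none) b (some j)) ≤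
        pgaPay lam c d W V imax b (fun _ => none) ↔
      pgaEdev lam c d W j ≤ pgaEcoop lam c W V imax b j := by
  rw [pgaPay_update_some, pgaPay_none_eq_add_pgaEcoop lam c d W V b (Nat.le_succ_of_le hj),
    add_le_add_iff_left, mul_le_mul_iff_right₀ (Real.exp_pos _)]

theorem pgaIsNash_none_iff (lam c d : ℝ) (W V : ℕ → ℝ) (imax : ℕ) :
    pgaIsNash lam c d W V imax (fun _ => none) ↔
      ∀ b : Fin 2, ∀ j : ℕ, j ≤ imax → j % 2 ≠ b.val →
        pgaEdev lam c d W j ≤ pgaEcoop lam c W V imax b j := by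
  constructor
  · intro hnash b j hj hnb
    exact (pgaPay_update_some_le_iff lam c d W V b hj).mp (hnash b (some j) ⟨hj, hnb⟩)
  · rintro h b (_ | j) hdev
    · exact (congrArg _ (Function.update_eq_self b _)).le
    · exact (pgaPay_update_some_le_iff lam c d W V b hdev.1).mpr (h b j hdev.1 hdev.2)

theorem stmt_11_general (lam c d : ℝ) (W V : ℕ → ℝ) (imax : ℕ) :
    ((∀ b : Fin 2, ∀ j : ℕ, j ≤ imax → j % 2 ≠ b.val →
        pgaEdev lam c d W j ≤ pgaEcoop lam c W V imax b j) →
      pgaIsNash lam c d W V imax (fun _ => none)) ∧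
    ((∃ b : Fin 2, ∃ j : ℕ, j ≤ imax ∧ j % 2 ≠ b.val ∧
        pgaEcoop lam c W V imax b j < pgaEdev lam c d W j) →
      ¬ pgaIsNash lam c d W V imax (fun _ => none)) := by
  refine ⟨(pgaIsNash_none_iff lam c d W V imax).mpr, ?_⟩
  rintro ⟨b, j, hj, hnb, hprofitable⟩ hnash
  exact ((pgaIsNash_none_iff lam c d W V imax).mp hnash b j hj hnb).not_gt hprofitable

/-- Grim-trigger equilibrium condition: the cooperative profile is a Nash
equilibrium if for every interval `j` the non-bidder's expected payoff from
continuing to cooperate is at least her expected payoff from deviating at the start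
of `j`; moreover, if deviation is strictly profitable for the non-bidder in some
interval, no equilibrium holds. -/
theorem stmt_11 (lam c d : ℝ) (W V : ℕ → ℝ) (imax : ℕ)
    (hlam : 0 < lam) (hc : 0 < c) (hd : 0 < d) (hV : StrictMono V) (hV0 : 0 ≤ V 0) :
    ((∀ b : Fin 2, ∀ j : ℕ, j ≤ imax → j % 2 ≠ b.val →
        pgaEdev lam c d W j ≤ pgaEcoop lam c W V imax b j) →
      pgaIsNash lam c d W V imax (fun _ => none)) ∧
    ((∃ b : Fin 2, ∃ j : ℕ, j ≤ imax ∧ j % 2 ≠ b.val ∧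
        pgaEcoop lam c W V imax b j < pgaEdev lam c d W j) →
      ¬ pgaIsNash lam c d W V imax (fun _ => none)) :=
  stmt_11_general lam c d W V imax
end
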